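/- arXiv:2110.07129 — 2 statements merged into one kernel-verified Lean document; each statement's English description precedes it below -/
import Mathlib

section
/- Let 1 < p < ∞ and set J_p(t) := |t|^{p−2}t for t ∈ ℝ. Then for every a, b ∈ ℝ with ab ≤ 0, one has: J_p(a−b)·a ≥ |a|^p − (p−1)|a−b|^{p−2} a b if 1 < p ≤ 2, and J_p(a−b)·a ≥ |a|^p − (p−1)|a|^{p−2} a b if p > 2. -/
open MeasureTheory Metric Set Filter
open scoped ENNReal symmDiff

noncomputable section

/-- Euclidean space `ℝⁿ`. -/
abbrev Rn (n : ℕ) := EuclideanSpace ℝ (Fin n)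

/-- The function `J_p(t) = |t|^{p-2} t`. -/
def Jp (p t : ℝ) : ℝ := |t| ^ (p - 2) * t

/-- The (p-th power of the) Gagliardo `W^{s,p}` seminorm
`[u]_{W^{s,p}}^p = ∬_{ℝ^{2n}} |u(x) - u(y)|^p |x-y|^{-(n+ps)} dx dy`. -/
def gagliardoP (n : ℕ) (p s : ℝ) (u : Rn n → ℝ) : ℝ :=
  ∫ z : Rn n × Rn n, |u z.1 - u z.2| ^ p / dist z.1 z.2 ^ ((n : ℝ) + p * s)

/-- The mixed local/nonlocal energy
`∫_Ω |∇u|^p dx + ∬_{ℝ^{2n}} |u(x)-u(y)|^p |x-y|^{-(n+ps)} dx dy`. -/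
def energy (n : ℕ) (p s : ℝ) (Ω : Set (Rn n)) (u : Rn n → ℝ) : ℝ :=
  (∫ x in Ω, ‖gradient u x‖ ^ p) + gagliardoP n p s u

/-- Membership in the Sobolev space `W^{1,p}(ℝⁿ)`: both `u` and its gradient
belong to `L^p(ℝⁿ)`. -/
def MemW1p (n : ℕ) (p : ℝ) (u : Rn n → ℝ) : Prop :=
  MemLp u (ENNReal.ofReal p) volume ∧ MemLp (gradient u) (ENNReal.ofReal p) volume

/-- The space `𝒳₀^{1,p}(Ω)`: functions of `W^{1,p}(ℝⁿ)` which are limits of smooth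
functions compactly supported in `Ω`, with respect to the global gradient `L^p` norm. -/
def X0 (n : ℕ) (p : ℝ) (Ω : Set (Rn n)) : Set (Rn n → ℝ) :=
  {u | MemW1p n p u ∧
    ∃ φ : ℕ → Rn n → ℝ,
      (∀ k, ContDiff ℝ (⊤ : ℕ∞) (φ k) ∧ HasCompactSupport (φ k) ∧ tsupport (φ k) ⊆ Ω) ∧
      Tendsto
        (fun k => eLpNorm (fun x => gradient u x - gradient (φ k) x)
          (ENNReal.ofReal p) volume) atTop (nhds 0)}

/-- The set `𝓜(Ω)` of `L^p`-normalized functions of `𝒳₀^{1,p}(Ω)`. -/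
def Mset (n : ℕ) (p : ℝ) (Ω : Set (Rn n)) : Set (Rn n → ℝ) :=
  {u | u ∈ X0 n p Ω ∧ ∫ x, |u x| ^ p = 1}

/-- The first Dirichlet eigenvalue of `𝓛_{p,s}` on `Ω`, defined through its
variational characterization. -/
def lambda1 (n : ℕ) (p s : ℝ) (Ω : Set (Rn n)) : ℝ :=
  sInf (energy n p s Ω '' Mset n p Ω)

/-- The distance on `𝒳₀^{1,p}` induced by the global gradient `L^p` norm. -/
def sobDist (n : ℕ) (p : ℝ) (u v : Rn n → ℝ) : ℝ :=
  (eLpNorm (fun x => gradient u x - gradient v x) (ENNReal.ofReal p) volume).toReal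

/-- The unit circle `S¹ ⊆ ℝ²`. -/
def unitCircle : Set (ℝ × ℝ) := {z | z.1 ^ 2 + z.2 ^ 2 = 1}

/-- The family `𝒦` of continuous odd maps `f : S¹ → 𝓜(Ω)`. -/
def Kfam (n : ℕ) (p : ℝ) (Ω : Set (Rn n)) : Set ((ℝ × ℝ) → Rn n → ℝ) :=
  {f | (∀ z ∈ unitCircle, f z ∈ Mset n p Ω) ∧
       (∀ z ∈ unitCircle, f (-z) = -f z) ∧
       (∀ z ∈ unitCircle, ∀ ε > 0, ∃ δ > 0, ∀ w ∈ unitCircle,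
          dist w z < δ → sobDist n p (f w) (f z) < ε)}

/-- The second Dirichlet eigenvalue of `𝓛_{p,s}` on `Ω`, defined through its
mountain-pass (minimax) characterization. -/
def lambda2 (n : ℕ) (p s : ℝ) (Ω : Set (Rn n)) : ℝ :=
  sInf {t | ∃ f ∈ Kfam n p Ω, t = sSup (energy n p s Ω '' (f '' unitCircle))}

/-- `(λ, u)` is a Dirichlet eigenpair of `𝓛_{p,s}` in `Ω`. -/
def IsEigenpair (n : ℕ) (p s : ℝ) (Ω : Set (Rn n)) (lam : ℝ) (u : Rn n → ℝ) : Prop :=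
  u ∈ X0 n p Ω ∧ u ≠ 0 ∧
  ∀ φ ∈ X0 n p Ω,
    (∫ x in Ω, ‖gradient u x‖ ^ (p - 2) * (inner ℝ (gradient u x) (gradient φ x) : ℝ)) +
      (∫ z : Rn n × Rn n,
        Jp p (u z.1 - u z.2) * (φ z.1 - φ z.2) / dist z.1 z.2 ^ ((n : ℝ) + p * s))
    = lam * ∫ x in Ω, |u x| ^ (p - 2) * u x * φ x

/-- `λ` is a Dirichlet eigenvalue of `𝓛_{p,s}` in `Ω`. -/
def IsEigenvalue (n : ℕ) (p s : ℝ) (Ω : Set (Rn n)) (lam : ℝ) : Prop :=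
  ∃ u, IsEigenpair n p s Ω lam u

/-- `u` is a weak solution of `𝓛_{p,s} u = f` in `Ω`. -/
def IsWeakSol (n : ℕ) (p s : ℝ) (Ω : Set (Rn n)) (f u : Rn n → ℝ) : Prop :=
  ∀ φ ∈ X0 n p Ω,
    (∫ x in Ω, ‖gradient u x‖ ^ (p - 2) * (inner ℝ (gradient u x) (gradient φ x) : ℝ)) +
      (∫ z : Rn n × Rn n,
        Jp p (u z.1 - u z.2) * (φ z.1 - φ z.2) / dist z.1 z.2 ^ ((n : ℝ) + p * s))
    = ∫ x in Ω, f x * φ x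

/-- `u` is a weak solution of the Dirichlet problem `𝓛_{p,s} u = f` in `Ω`, `u = g`
in `ℝⁿ ∖ Ω`. -/
def IsDirichletSol (n : ℕ) (p s : ℝ) (Ω : Set (Rn n)) (f g u : Rn n → ℝ) : Prop :=
  MemW1p n p u ∧ IsWeakSol n p s Ω f u ∧ (u - g) ∈ X0 n p Ω

/-- The nonlocal tail `Tail(u, z, ρ)`. -/
def tailF (n : ℕ) (p s : ℝ) (u : Rn n → ℝ) (z : Rn n) (ρ : ℝ) : ℝ :=
  (ρ ^ p * ∫ x in (Metric.ball z ρ)ᶜ, |u x| ^ p / dist x z ^ ((n : ℝ) + p * s)) ^ (1 / p)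

/-- The `L^∞(E)` norm of `f`. -/
def linftyNorm (n : ℕ) (E : Set (Rn n)) (f : Rn n → ℝ) : ℝ :=
  (eLpNorm f ⊤ (volume.restrict E)).toReal

section Bern

lemma bern_le {A B q : ℝ} (hA : 0 < A) (hB : 0 ≤ B) (hq0 : 0 ≤ q) (hq1 : q ≤ 1) :
    (A + B) ^ q ≤ A ^ q + q * A ^ (q - 1) * B := by
  have ht : (0:ℝ) ≤ B / A := div_nonneg hB hA.le
  have h := rpow_one_add_le_one_add_mul_self (by linarith : (-1:ℝ) ≤ B / A) hq0 hq1
  have h1 : (A + B) ^ q = A ^ q * (1 + B / A) ^ q := by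
    rw [← Real.mul_rpow hA.le (by positivity)]
    congr 1
    field_simp
  have h2 : A ^ (q - 1) = A ^ q / A := by
    rw [Real.rpow_sub hA, Real.rpow_one]
  rw [h1, h2]
  have hAq : 0 < A ^ q := Real.rpow_pos_of_pos hA q
  calc A ^ q * (1 + B / A) ^ q ≤ A ^ q * (1 + q * (B / A)) :=
        mul_le_mul_of_nonneg_left h hAq.le
    _ = A ^ q + q * (A ^ q / A) * B := by field_simp

lemma bern_ge {A B q : ℝ} (hA : 0 < A) (hB : 0 ≤ B) (hq : 1 ≤ q) :
    A ^ q + q * A ^ (q - 1) * B ≤ (A + B) ^ q := by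
  have ht : (0:ℝ) ≤ B / A := div_nonneg hB hA.le
  have h := one_add_mul_self_le_rpow_one_add (by linarith : (-1:ℝ) ≤ B / A) hq
  have h1 : (A + B) ^ q = A ^ q * (1 + B / A) ^ q := by
    rw [← Real.mul_rpow hA.le (by positivity)]
    congr 1
    field_simp
  have h2 : A ^ (q - 1) = A ^ q / A := by
    rw [Real.rpow_sub hA, Real.rpow_one]
  rw [h1, h2]
  have hAq : 0 < A ^ q := Real.rpow_pos_of_pos hA q
  calc A ^ q + q * (A ^ q / A) * B = A ^ q * (1 + q * (B / A)) := by field_simp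
    _ ≤ A ^ q * (1 + B / A) ^ q := mul_le_mul_of_nonneg_left h hAq.le

end Bern

/-- **Algebraic lemma, part 1.** For `1 < p < ∞` and `a, b ∈ ℝ` with `ab ≤ 0`:
`J_p(a−b)·a ≥ |a|^p − (p−1)|a−b|^{p−2} ab` if `1 < p ≤ 2`, and
`J_p(a−b)·a ≥ |a|^p − (p−1)|a|^{p−2} ab` if `p > 2`. -/

theorem algebraic_lemma_one (p : ℝ) (hp : 1 < p) (a b : ℝ) (hab : a * b ≤ 0) :
    (p ≤ 2 → |a| ^ p - (p - 1) * |a - b| ^ (p - 2) * (a * b) ≤ Jp p (a - b) * a) ∧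
    (2 < p → |a| ^ p - (p - 1) * |a| ^ (p - 2) * (a * b) ≤ Jp p (a - b) * a) := by
  by_cases ha0 : a = 0
  · subst ha0
    simp [Jp, Real.zero_rpow (by positivity : p ≠ 0)]
  -- basic sign facts
  have hA : 0 < |a| := abs_pos.mpr ha0
  have hB : 0 ≤ |b| := abs_nonneg b
  have hABpos : 0 < |a| + |b| := by linarith
  have habs : |a - b| = |a| + |b| := by
    rcases lt_trichotomy a 0 with ha | ha | ha
    · have hb : 0 ≤ b := by nlinarith
      rw [abs_of_nonpos (by linarith), abs_of_neg ha, abs_of_nonneg hb]; ring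
    · exact absurd ha ha0
    · have hb : b ≤ 0 := by nlinarith
      rw [abs_of_nonneg (by linarith), abs_of_pos ha, abs_of_nonpos hb]; ring
  have hmul : a * b = -(|a| * |b|) := by
    rw [← abs_mul, abs_of_nonpos hab]; ring
  have hprod : (a - b) * a = |a| * |a| + |a| * |b| := by
    have : a * a = |a| * |a| := (abs_mul_abs_self a).symm
    nlinarith [hmul]
  have hJp : Jp p (a - b) * a = (|a| + |b|) ^ (p - 2) * (|a| * |a| + |a| * |b|) := by
    rw [Jp, habs, mul_assoc, hprod]
  set A := |a| with hAdef
  set B := |b| with hBdef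
  constructor
  · -- case 1 < p ≤ 2
    intro hp2
    rw [hJp, habs, hmul]
    -- goal: A^p + (p-1)*(A+B)^(p-2)*(A*B) ≤ (A+B)^(p-2)*(A*A+A*B)
    have key : A ^ p * (A + B) ^ (2 - p) ≤ A * A + (2 - p) * (A * B) := by
      have hb := bern_le hA hB (by linarith : (0:ℝ) ≤ 2 - p) (by linarith : 2 - p ≤ 1)
      have e1 : A ^ p * A ^ (2 - p) = A * A := by
        rw [← Real.rpow_add hA, show p + (2 - p) = (1:ℝ) + 1 by ring, Real.rpow_add hA,
          Real.rpow_one]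
      have e2 : A ^ p * A ^ (2 - p - 1) = A := by
        rw [← Real.rpow_add hA, show p + (2 - p - 1) = (1:ℝ) by ring, Real.rpow_one]
      calc A ^ p * (A + B) ^ (2 - p)
          ≤ A ^ p * (A ^ (2 - p) + (2 - p) * A ^ (2 - p - 1) * B) :=
            mul_le_mul_of_nonneg_left hb (Real.rpow_pos_of_pos hA p).le
        _ = A * A + (2 - p) * (A * B) := by linear_combination e1 + (2 - p) * B * e2
    have hpow : (A + B) ^ (p - 2) * (A + B) ^ (2 - p) = 1 := by
      rw [← Real.rpow_add hABpos, show p - 2 + (2 - p) = (0:ℝ) by ring, Real.rpow_zero]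
    have hpow2 : (A + B) ^ (p - 2) * (A * A + A * B) * (A + B) ^ (2 - p) = A * A + A * B := by
      linear_combination (A * A + A * B) * hpow
    have hABq : 0 < (A + B) ^ (2 - p) := Real.rpow_pos_of_pos hABpos _
    rw [← mul_le_mul_iff_of_pos_right hABq]
    calc (A ^ p - (p - 1) * (A + B) ^ (p - 2) * -(A * B)) * (A + B) ^ (2 - p)
        = A ^ p * (A + B) ^ (2 - p)
          + (p - 1) * ((A + B) ^ (p - 2) * (A + B) ^ (2 - p)) * (A * B) := by ring
      _ = A ^ p * (A + B) ^ (2 - p) + (p - 1) * (A * B) := by rw [hpow]; ring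
      _ ≤ A * A + (2 - p) * (A * B) + (p - 1) * (A * B) := by linarith
      _ = A * A + A * B := by ring
      _ = (A + B) ^ (p - 2) * (A * A + A * B) * (A + B) ^ (2 - p) := hpow2.symm
  · -- case 2 < p
    intro hp2
    rw [hJp, hmul]
    -- goal: A^p + (p-1)*A^(p-2)*(A*B) ≤ (A+B)^(p-2)*(A*A+A*B)
    have hb := bern_ge (A := A) (B := B) hA hB (by linarith : (1:ℝ) ≤ p - 1)
    have e1 : A * A ^ (p - 1) = A ^ p := by
      nth_rewrite 1 [← Real.rpow_one A]
      rw [← Real.rpow_add hA]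
      norm_num
    have e2 : A ^ (p - 1 - 1) = A ^ (p - 2) := by rw [show p - 1 - 1 = p - 2 by ring]
    have e3 : (A + B) ^ (p - 2) * (A * A + A * B) = A * (A + B) ^ (p - 1) := by
      rw [show A * A + A * B = A * (A + B) by ring,
        show (p:ℝ) - 1 = (p - 2) + 1 by ring, Real.rpow_add_one hABpos.ne']
      ring
    rw [e3]
    calc A ^ p - (p - 1) * A ^ (p - 2) * -(A * B)
        = A * (A ^ (p - 1) + (p - 1) * A ^ (p - 1 - 1) * B) := by
          rw [e2]; linear_combination -e1
      _ ≤ A * (A + B) ^ (p - 1) := mul_le_mul_of_nonneg_left hb hA.le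

end
end

section
/- Let 1 < p < ∞. Then there exists a constant c_p > 0 such that for all a, b ∈ ℝ: |a−b|^p ≤ |a|^p + |b|^p + c_p (|a|^2 + |b|^2)^{(p−2)/2} |ab|. -/
open MeasureTheory Metric Set Filter
open scoped ENNReal symmDiff

noncomputable section

open Real

lemma nat_pow_bound (n : ℕ) {t : ℝ} (h0 : 0 ≤ t) (h1 : t ≤ 1) :
    (1 + t) ^ n ≤ 1 + ((2:ℝ) ^ n - 1) * t := by
  induction n with
  | zero => simp
  | succ n ih =>
    have h2 : (1:ℝ) ≤ 2 ^ n := one_le_pow₀ one_le_two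
    have h3 : (1 + t) ^ (n + 1) = (1 + t) ^ n * (1 + t) := by ring
    rw [h3]
    have hle : (1 + t) ^ n * (1 + t) ≤ (1 + (2 ^ n - 1) * t) * (1 + t) :=
      mul_le_mul_of_nonneg_right ih (by linarith)
    refine hle.trans ?_
    have ht2 : t * t ≤ t := by nlinarith
    nlinarith [mul_le_mul_of_nonneg_left ht2 (by linarith : (0:ℝ) ≤ 2 ^ n - 1), pow_succ (2:ℝ) n]

/-- **Algebraic lemma, part 2.** For `1 < p < ∞` there is `c_p > 0` such that for
all `a, b ∈ ℝ`: `|a−b|^p ≤ |a|^p + |b|^p + c_p (|a|² + |b|²)^{(p−2)/2} |ab|`. -/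
theorem algebraic_lemma_two (p : ℝ) (hp : 1 < p) :
    ∃ c : ℝ, 0 < c ∧ ∀ a b : ℝ,
      |a - b| ^ p ≤ |a| ^ p + |b| ^ p +
        c * (|a| ^ 2 + |b| ^ 2) ^ ((p - 2) / 2) * |a * b| := by
  obtain ⟨n, hpn⟩ : ∃ n : ℕ, p ≤ (n : ℝ) := ⟨⌈p⌉₊, Nat.le_ceil p⟩
  obtain ⟨K, hK⟩ : ∃ K : ℝ, K = 2 ^ n := ⟨_, rfl⟩
  have hKpos : (0:ℝ) < K := by rw [hK]; positivity
  obtain ⟨M, hM⟩ : ∃ M : ℝ, M = 1 + 2 ^ ((2 - p) / 2) := ⟨_, rfl⟩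
  have hX : (0:ℝ) < 2 ^ ((2 - p) / 2) := rpow_pos_of_pos two_pos _
  have hMpos : (0:ℝ) < M := by rw [hM]; linarith
  have hM1 : (1:ℝ) ≤ M := by rw [hM]; linarith
  have hp0 : p ≠ 0 := by linarith
  refine ⟨K * M, by positivity, ?_⟩
  have key : ∀ A B : ℝ, 0 ≤ B → B ≤ A →
      (A + B) ^ p ≤ A ^ p + B ^ p + (K * M) * (A ^ 2 + B ^ 2) ^ ((p - 2) / 2) * (A * B) := by
    intro A B hB hBA
    have hA : 0 ≤ A := hB.trans hBA
    rcases eq_or_lt_of_le hA with hA0 | hA0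
    · have hB0 : B = 0 := le_antisymm (hBA.trans_eq hA0.symm) hB
      have hA0' : A = 0 := hA0.symm
      subst hB0; subst hA0'
      simp [Real.zero_rpow hp0]
    · obtain ⟨t, ht⟩ : ∃ t : ℝ, t = B / A := ⟨_, rfl⟩
      have ht0 : 0 ≤ t := by rw [ht]; exact div_nonneg hB hA0.le
      have ht1 : t ≤ 1 := by rw [ht]; exact (div_le_one hA0).2 hBA
      have hAB : A + B = A * (1 + t) := by rw [ht]; field_simp
      have h1t : (0:ℝ) ≤ 1 + t := by linarith
      have step1 : (A + B) ^ p = A ^ p * (1 + t) ^ p := by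
        rw [hAB, Real.mul_rpow hA0.le h1t]
      have step2 : (1 + t) ^ p ≤ 1 + K * t := by
        have h1 : (1 + t) ^ p ≤ (1 + t) ^ (n : ℝ) :=
          rpow_le_rpow_of_exponent_le (by linarith) hpn
        have h2 : (1 + t) ^ ((n : ℕ) : ℝ) = (1 + t) ^ n := rpow_natCast _ n
        have h4 : (1 + t) ^ n ≤ 1 + ((2:ℝ) ^ n - 1) * t := nat_pow_bound n ht0 ht1
        have h5 : ((2:ℝ) ^ n - 1) * t ≤ K * t := by
          apply mul_le_mul_of_nonneg_right _ ht0
          rw [hK]; linarith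
        calc (1 + t) ^ p ≤ (1 + t) ^ n := by rw [← h2]; exact h1
          _ ≤ 1 + ((2:ℝ) ^ n - 1) * t := h4
          _ ≤ 1 + K * t := by linarith
      have hApt : A ^ p * t = A ^ (p - 1) * B := by
        rw [ht, show p = (p - 1) + 1 by ring, rpow_add_one hA0.ne']
        field_simp; ring
      have step3 : (A + B) ^ p ≤ A ^ p + K * (A ^ (p - 1) * B) := by
        have hApos : (0:ℝ) < A ^ p := rpow_pos_of_pos hA0 p
        have e : A ^ p * (1 + K * t) = A ^ p + K * (A ^ (p - 1) * B) := by
          rw [← hApt]; ring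
        calc (A + B) ^ p = A ^ p * (1 + t) ^ p := step1
          _ ≤ A ^ p * (1 + K * t) := mul_le_mul_of_nonneg_left step2 hApos.le
          _ = A ^ p + K * (A ^ (p - 1) * B) := e
      have hS : (0:ℝ) < A ^ 2 + B ^ 2 := by positivity
      have hA2rpow : ((A:ℝ) ^ (2:ℕ)) ^ ((p - 2) / 2) = A ^ (p - 2) := by
        rw [← rpow_natCast A 2, ← rpow_mul hA0.le]
        congr 1; push_cast; ring
      have hq : (0:ℝ) ≤ (A ^ 2 + B ^ 2) ^ ((p - 2) / 2) := by positivity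
      have claim : A ^ (p - 2) ≤ M * (A ^ 2 + B ^ 2) ^ ((p - 2) / 2) := by
        rcases le_total 2 p with hp2 | hp2
        · have h1 : ((A:ℝ) ^ (2:ℕ)) ^ ((p - 2) / 2) ≤ (A ^ 2 + B ^ 2) ^ ((p - 2) / 2) :=
            rpow_le_rpow (by positivity) (by nlinarith) (by linarith)
          have h4 := mul_le_mul_of_nonneg_right hM1 hq
          rw [one_mul] at h4
          calc A ^ (p - 2) = ((A:ℝ) ^ (2:ℕ)) ^ ((p - 2) / 2) := hA2rpow.symm
            _ ≤ (A ^ 2 + B ^ 2) ^ ((p - 2) / 2) := h1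
            _ ≤ M * (A ^ 2 + B ^ 2) ^ ((p - 2) / 2) := h4
        · have hhalf : (A ^ 2 + B ^ 2) / 2 ≤ (A:ℝ) ^ (2:ℕ) := by nlinarith
          have h1 : ((A:ℝ) ^ (2:ℕ)) ^ ((p - 2) / 2) ≤ ((A ^ 2 + B ^ 2) / 2) ^ ((p - 2) / 2) :=
            rpow_le_rpow_of_nonpos (by positivity) hhalf (by linarith)
          have h2 : ((A ^ 2 + B ^ 2) / 2) ^ ((p - 2) / 2)
              = (A ^ 2 + B ^ 2) ^ ((p - 2) / 2) * 2 ^ ((2 - p) / 2) := by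
            rw [Real.div_rpow hS.le (by norm_num), div_eq_mul_inv,
              ← Real.rpow_neg (by norm_num : (0:ℝ) ≤ 2),
              show -((p - 2) / 2) = (2 - p) / 2 by ring]
          have h5 : (A ^ 2 + B ^ 2) ^ ((p - 2) / 2) * 2 ^ ((2 - p) / 2)
              ≤ M * (A ^ 2 + B ^ 2) ^ ((p - 2) / 2) := by
            rw [hM]; nlinarith [hq]
          calc A ^ (p - 2) = ((A:ℝ) ^ (2:ℕ)) ^ ((p - 2) / 2) := hA2rpow.symm
            _ ≤ (A ^ 2 + B ^ 2) ^ ((p - 2) / 2) * 2 ^ ((2 - p) / 2) := by rw [← h2]; exact h1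
            _ ≤ M * (A ^ 2 + B ^ 2) ^ ((p - 2) / 2) := h5
      have hAp1 : A ^ (p - 1) = A ^ (p - 2) * A := by
        rw [show p - 1 = (p - 2) + 1 by ring, rpow_add_one hA0.ne']
      have hfin : K * (A ^ (p - 1) * B)
          ≤ (K * M) * (A ^ 2 + B ^ 2) ^ ((p - 2) / 2) * (A * B) := by
        have h6 : A ^ (p - 2) * (A * B) ≤ (M * (A ^ 2 + B ^ 2) ^ ((p - 2) / 2)) * (A * B) :=
          mul_le_mul_of_nonneg_right claim (mul_nonneg hA0.le hB)
        calc K * (A ^ (p - 1) * B) = K * (A ^ (p - 2) * (A * B)) := by rw [hAp1]; ring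
          _ ≤ K * ((M * (A ^ 2 + B ^ 2) ^ ((p - 2) / 2)) * (A * B)) :=
              mul_le_mul_of_nonneg_left h6 hKpos.le
          _ = (K * M) * (A ^ 2 + B ^ 2) ^ ((p - 2) / 2) * (A * B) := by ring
      have hBp : (0:ℝ) ≤ B ^ p := rpow_nonneg hB p
      linarith [step3, hfin]
  intro a b
  have h1 : |a - b| ^ p ≤ (|a| + |b|) ^ p :=
    rpow_le_rpow (abs_nonneg _) (abs_sub _ _) (by linarith)
  have hab : |a * b| = |a| * |b| := abs_mul a b
  rcases le_total |b| |a| with hle | hle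
  · have := key |a| |b| (abs_nonneg _) hle
    rw [hab]; linarith
  · have h2 := key |b| |a| (abs_nonneg _) hle
    rw [hab]
    calc |a - b| ^ p ≤ (|a| + |b|) ^ p := h1
      _ = (|b| + |a|) ^ p := by rw [add_comm]
      _ ≤ |b| ^ p + |a| ^ p + K * M * (|b| ^ 2 + |a| ^ 2) ^ ((p - 2) / 2) * (|b| * |a|) := h2
      _ = |a| ^ p + |b| ^ p + K * M * (|a| ^ 2 + |b| ^ 2) ^ ((p - 2) / 2) * (|a| * |b|) := by
          rw [add_comm (|b| ^ 2), mul_comm |b| |a|]; ring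


end
end
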